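/- arXiv:2405.15105 — 3 statements merged into one kernel-verified Lean document; each statement's English description precedes it below -/
import Mathlib

section
/- Fix a positive integer T, a real α ∈ [0,1] with αT ≥ 2, a demand bound Wmax > 0, real demands W_t with 0 ≤ W_t < Wmax for all t, an initial stock X_0 ≥ 0, and an arbitrary real sequence (ŵ_t) (the outputs of any demand predictor). Define the cumulative error E_t = ∑_{k=1}^{t} 𝟙[X_k ≤ 0] (with E_0 = 0), the denominator d_t = (t/T)(αT − 2) + 2, and the gain g_t(E) = tan((π/2)·(E+1)/d_t) if d_t > 0 and E + 1 < d_t, and g_t(E) = +∞ otherwise. Let the orders be U_t = Wmax − X_t whenever g_t(E_t) = +∞, and U_t = min( max( ŵ_t + g_t(E_t) − X_t, 0), Wmax − X_t ) otherwise, and let the stock evolve as X_{t+1} = max(0, X_t + U_t − W_t). Then ∑_{t=1}^{T} 𝟙[X_t ≤ 0] ≤ αT; equivalently, the policy is admissible with service level 1 − α: (1/T) ∑_{t=1}^{T} 𝟙[X_t > 0] ≥ 1 − α. -/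
/-!
The error count `E t` never reaches the denominator `d t`. Indeed `d` is nondecreasing,
`E` grows by at most one per step, and as soon as `E t + 1` reaches `d t` the gain is
infinite, so the policy orders up to `Wmax`; since demand stays below `Wmax`, the next
stock level is positive and `E` does not grow. At the horizon `d T = α T`.
-/

open Finset

theorem lt_of_step_le_of_stall {e d : ℕ → ℝ} (hd : Monotone d) (h0 : e 0 < d 0)
    (hstep : ∀ t, e (t + 1) ≤ e t + 1) (hstall : ∀ t, d t ≤ e t + 1 → e (t + 1) ≤ e t)
    (t : ℕ) : e t < d t := by
  induction t with
  | zero => exact h0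
  | succ t ih =>
    have hdt : d t ≤ d (t + 1) := hd t.le_succ
    by_cases hfar : e t + 1 < d t
    · linarith [hstep t]
    · linarith [hstall t (not_lt.mp hfar)]

theorem one_sub_le_mean_pos {ι : Type*} {s : Finset ι} (hs : s.Nonempty) {x : ι → ℝ} {α : ℝ}
    (hfail : ∑ i ∈ s, (if x i ≤ 0 then (1 : ℝ) else 0) ≤ α * #s) :
    1 - α ≤ 1 / (#s : ℝ) * ∑ i ∈ s, (if 0 < x i then (1 : ℝ) else 0) := by
  have hcard : (0 : ℝ) < #s := by exact_mod_cast hs.card_pos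
  have hsplit : ∑ i ∈ s, (if 0 < x i then (1 : ℝ) else 0)
      + ∑ i ∈ s, (if x i ≤ 0 then (1 : ℝ) else 0) = #s := by
    rw [← sum_add_distrib, ← nsmul_one, ← sum_const]
    refine sum_congr rfl fun i _ => ?_
    by_cases hx : x i ≤ 0
    · simp [hx, not_lt.mpr hx]
    · simp [hx, not_le.mp hx]
  rw [one_div, inv_mul_eq_div, le_div_iff₀ hcard]
  linarith

theorem policy_admissible_general
    (T : ℕ) (hT : 0 < T)
    (α : ℝ) (hαT : 2 ≤ α * T)
    (Wmax : ℝ)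
    (W : ℕ → ℝ) (hW : ∀ t, 0 ≤ W t ∧ W t < Wmax)
    (X : ℕ → ℝ)
    (U : ℕ → ℝ)
    (E : ℕ → ℕ)
    (hE : ∀ t, E t = ∑ k ∈ Finset.Icc 1 t, if X k ≤ 0 then 1 else 0)
    (d : ℕ → ℝ)
    (hd : ∀ t, d t = ((t : ℝ) / T) * (α * T - 2) + 2)
    (hUsat : ∀ t, ¬(0 < d t ∧ ((E t : ℝ) + 1) < d t) → U t = Wmax - X t)
    (hdyn : ∀ t, X (t + 1) = max 0 (X t + U t - W t)) :
    (∑ t ∈ Finset.Icc 1 T, (if X t ≤ 0 then (1 : ℝ) else 0)) ≤ α * T ∧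
      (1 / (T : ℝ)) * ∑ t ∈ Finset.Icc 1 T, (if 0 < X t then (1 : ℝ) else 0) ≥ 1 - α := by
  have hslope : 0 ≤ α * T - 2 := by linarith
  have hd_mono : Monotone d := fun s t hst => by rw [hd, hd]; gcongr
  have hE_succ : ∀ t, E (t + 1) = E t + if X (t + 1) ≤ 0 then 1 else 0 := fun t => by
    rw [hE, hE, sum_Icc_succ_top (by omega)]
  have hE_lt : ∀ t, (E t : ℝ) < d t := by
    refine lt_of_step_le_of_stall hd_mono (by simp [hE, hd]) (fun t => ?_) (fun t hsat => ?_)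
    · rw [hE_succ]; split_ifs <;> simp
    · have hstock : 0 < X (t + 1) := by
        rw [hdyn, hUsat t fun h => (not_lt.mpr hsat) h.2]
        exact lt_max_of_lt_right (by linarith [(hW t).2])
      simp [hE_succ, not_le.mpr hstock]
  have hcard : (#(Icc 1 T) : ℝ) = T := by simp
  have hfail : ∑ t ∈ Icc 1 T, (if X t ≤ 0 then (1 : ℝ) else 0) ≤ α * #(Icc 1 T) := by
    have hET := hE_lt T
    rw [hd, div_self (by positivity)] at hET
    simp only [hE, Nat.cast_sum, Nat.cast_ite, Nat.cast_one, Nat.cast_zero] at hET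
    rw [hcard]; linarith
  have hsuccess := one_sub_le_mean_pos (nonempty_Icc.mpr hT) hfail
  rw [hcard] at hfail hsuccess
  exact ⟨hfail, hsuccess⟩

/-- Theorem 1: the data-driven order policy with nonlinear (tangent) integral
gain is admissible with service level `1 - α`, for any demand predictor `wpred`. -/
theorem policy_admissible
    (T : ℕ) (hT : 0 < T)
    (α : ℝ) (hα0 : 0 ≤ α) (hα1 : α ≤ 1) (hαT : 2 ≤ α * T)
    (Wmax : ℝ) (hWmax : 0 < Wmax)
    (W : ℕ → ℝ) (hW : ∀ t, 0 ≤ W t ∧ W t < Wmax)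
    (X : ℕ → ℝ) (hX0 : 0 ≤ X 0)
    (wpred : ℕ → ℝ)
    (U : ℕ → ℝ)
    (E : ℕ → ℕ)
    (hE : ∀ t, E t = ∑ k ∈ Finset.Icc 1 t, if X k ≤ 0 then 1 else 0)
    (d : ℕ → ℝ)
    (hd : ∀ t, d t = ((t : ℝ) / T) * (α * T - 2) + 2)
    -- the gain `g t (E t)` equals `tan ((π/2) (E t + 1) / d t)` when
    -- `d t > 0` and `E t + 1 < d t`, and `+∞` otherwise; the order is
    -- `Wmax - X t` in the saturated (`+∞`) case and the clipped
    -- prediction-plus-gain order otherwise.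
    (hUfin : ∀ t, 0 < d t → ((E t : ℝ) + 1) < d t →
        U t = min (max (wpred t + Real.tan (Real.pi / 2 * (((E t : ℝ) + 1) / d t)) - X t) 0)
                  (Wmax - X t))
    (hUsat : ∀ t, ¬(0 < d t ∧ ((E t : ℝ) + 1) < d t) → U t = Wmax - X t)
    (hdyn : ∀ t, X (t + 1) = max 0 (X t + U t - W t)) :
    (∑ t ∈ Finset.Icc 1 T, (if X t ≤ 0 then (1 : ℝ) else 0)) ≤ α * T ∧
      (1 / (T : ℝ)) * ∑ t ∈ Finset.Icc 1 T, (if 0 < X t then (1 : ℝ) else 0) ≥ 1 - α :=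
  policy_admissible_general T hT α hαT Wmax W hW X U E hE d hd hUsat hdyn
end

section
/- Fix a positive integer T, a real α ∈ [0,1], a demand bound Wmax > 0, real demands W_t with 0 ≤ W_t < Wmax for all t, an initial stock X_0 ≥ 0, and orders U_t with stock evolving as X_{t+1} = max(0, X_t + U_t − W_t). Let b : ℕ → ℝ be nondecreasing with 0 ≤ b(t) ≤ αT for all t ≤ T, and write E_t = ∑_{k=1}^{t} 𝟙[X_k ≤ 0]. Suppose the orders satisfy the following saturation property: for every t < T, if E_t + 1 ≥ b(t) then X_t + U_t ≥ Wmax (the policy orders up to at least the demand bound whenever the error count reaches the bound). Then ∑_{t=1}^{T} 𝟙[X_t ≤ 0] ≤ αT, i.e. the order sequence is admissible with service level 1 − α. -/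
/-- General admissibility theorem: any order sequence whose orders saturate to
(at least) the demand bound whenever the cumulative error count reaches the
error bound function is admissible with service level `1 - α`. -/
theorem saturating_policy_admissible
    (T : ℕ) (hT : 0 < T)
    (α : ℝ) (hα0 : 0 ≤ α) (hα1 : α ≤ 1)
    (Wmax : ℝ) (hWmax : 0 < Wmax)
    (W : ℕ → ℝ) (hW : ∀ t, 0 ≤ W t ∧ W t < Wmax)
    (X U : ℕ → ℝ) (hX0 : 0 ≤ X 0)
    (hdyn : ∀ t, X (t + 1) = max 0 (X t + U t - W t))
    (b : ℕ → ℝ) (hbmono : Monotone b)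
    (hb : ∀ t ≤ T, 0 ≤ b t ∧ b t ≤ α * T)
    (E : ℕ → ℕ)
    (hE : ∀ t, E t = ∑ k ∈ Finset.Icc 1 t, if X k ≤ 0 then 1 else 0)
    (hsat : ∀ t < T, b t ≤ (E t : ℝ) + 1 → Wmax ≤ X t + U t) :
    (∑ t ∈ Finset.Icc 1 T, (if X t ≤ 0 then (1 : ℝ) else 0)) ≤ α * T ∧
      (1 / (T : ℝ)) * ∑ t ∈ Finset.Icc 1 T, (if 0 < X t then (1 : ℝ) else 0) ≥ 1 - α := by
  classical
  have hTpos : (0 : ℝ) < T := by exact_mod_cast hT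
  -- main bound on the error count
  have hET : (E T : ℝ) ≤ α * T := by
    by_cases hne : ∃ k ∈ Finset.Icc 1 T, X k ≤ 0
    · set s := (Finset.Icc 1 T).filter (fun k => X k ≤ 0) with hs
      have hsne : s.Nonempty := by
        obtain ⟨k, hk, hxk⟩ := hne
        exact ⟨k, Finset.mem_filter.2 ⟨hk, hxk⟩⟩
      have hms : s.max' hsne ∈ s := Finset.max'_mem _ _
      have hm1 : 1 ≤ s.max' hsne := (Finset.mem_Icc.1 (Finset.mem_filter.1 hms).1).1
      have hmT : s.max' hsne ≤ T := (Finset.mem_Icc.1 (Finset.mem_filter.1 hms).1).2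
      have hXm : X (s.max' hsne) ≤ 0 := (Finset.mem_filter.1 hms).2
      obtain ⟨t, hmt⟩ : ∃ t, s.max' hsne = t + 1 :=
        ⟨s.max' hsne - 1, (Nat.succ_pred_eq_of_pos hm1).symm⟩
      rw [hmt] at hmT hXm
      have hlt : ((E t : ℝ) + 1) < b t := by
        by_contra h
        push_neg at h
        have hsat' := hsat t (by omega) h
        have hW' := hW t
        have hx : 0 < X (t + 1) := by
          rw [hdyn t]
          have h0 : 0 < X t + U t - W t := by linarith [hW'.2]
          exact lt_of_lt_of_le h0 (le_max_right _ _)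
        linarith
      have hEstep : E (t + 1) = E t + 1 := by
        rw [hE (t + 1), hE t, Finset.sum_Icc_succ_top (by omega : 1 ≤ t + 1),
          if_pos hXm]
      have hETm : E T = E (t + 1) := by
        rw [hE T, hE (t + 1)]
        refine (Finset.sum_subset (Finset.Icc_subset_Icc_right hmT) ?_).symm
        intro k hk hk'
        rw [if_neg]
        intro hxk
        have hks : k ∈ s := Finset.mem_filter.2 ⟨hk, hxk⟩
        have hkm := Finset.le_max' s k hks
        rw [hmt] at hkm
        simp only [Finset.mem_Icc] at hk hk'
        omega
      have hbT := (hb t (by omega)).2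
      rw [hETm, hEstep]
      push_cast
      linarith
    · push_neg at hne
      have hE0 : E T = 0 := by
        rw [hE T]
        exact Finset.sum_eq_zero fun k hk => if_neg (not_le.2 (hne k hk))
      rw [hE0]
      norm_num
      exact mul_nonneg hα0 hTpos.le
  have hcast : ((E T : ℝ)) = ∑ t ∈ Finset.Icc 1 T, (if X t ≤ 0 then (1 : ℝ) else 0) := by
    rw [hE T]
    push_cast
    rfl
  have hS : (∑ t ∈ Finset.Icc 1 T, (if X t ≤ 0 then (1 : ℝ) else 0)) ≤ α * T := by
    rw [← hcast]; exact hET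
  refine ⟨hS, ?_⟩
  have hcompl : ∑ t ∈ Finset.Icc 1 T, (if 0 < X t then (1 : ℝ) else 0)
      = (T : ℝ) - ∑ t ∈ Finset.Icc 1 T, (if X t ≤ 0 then (1 : ℝ) else 0) := by
    have h1 : ∀ t, (if 0 < X t then (1 : ℝ) else 0) = 1 - (if X t ≤ 0 then (1 : ℝ) else 0) := by
      intro t
      by_cases h : X t ≤ 0
      · rw [if_neg (not_lt.2 h), if_pos h]; ring
      · rw [if_pos (lt_of_not_ge h), if_neg h]; ring
    rw [Finset.sum_congr rfl fun t _ => h1 t, Finset.sum_sub_distrib, Finset.sum_const,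
      Nat.card_Icc]
    simp
  rw [hcompl]
  have hdiv : (∑ t ∈ Finset.Icc 1 T, (if X t ≤ 0 then (1 : ℝ) else 0)) / T ≤ α :=
    (div_le_iff₀ hTpos).2 hS
  have heq : (1 / (T : ℝ)) * ((T : ℝ) - ∑ t ∈ Finset.Icc 1 T, (if X t ≤ 0 then (1 : ℝ) else 0))
      = 1 - (∑ t ∈ Finset.Icc 1 T, (if X t ≤ 0 then (1 : ℝ) else 0)) / T := by
    field_simp
  rw [heq]
  linarith
end

section
/- Let T be a positive integer and α ≥ 0 a real number. Let E : ℕ → ℕ satisfy E_0 = 0 and E_{t+1} ≤ E_t + 1 for every t (the error count increases by at most one per step, and may decrease). Let b : ℕ → ℝ be nondecreasing with 0 ≤ b(t) ≤ αT for all t, let g_∘ ∈ ℝ ∪ {+∞}, and let g_t : ℕ → ℝ ∪ {+∞} satisfy: for all t and all integers E, if E + 1 ≥ b(t) then g_t(E) ≥ g_∘. Assume that for every t, g_t(E_t) ≥ g_∘ implies E_{t+1} ≤ E_t. Then E_t ≤ b(t) ≤ αT for every t. -/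
/-- Variant of the error bound lemma for the cost-inference setting: the error
process may increase by at most one per step (and may decrease), and a
saturated gain implies no increase; then the error process is bounded by the
error bound function, hence by `α T`. -/
theorem error_process_bounded_variant
    (T : ℕ) (hT : 0 < T) (α : ℝ) (hα : 0 ≤ α)
    (E : ℕ → ℕ) (hE0 : E 0 = 0)
    (hEstep : ∀ t, E (t + 1) ≤ E t + 1)
    (b : ℕ → ℝ) (hbmono : Monotone b)
    (hb : ∀ t, 0 ≤ b t ∧ b t ≤ α * T)
    (gsat : EReal) (g : ℕ → ℕ → EReal)
    (hgain : ∀ (t : ℕ) (e : ℕ), b t ≤ (e : ℝ) + 1 → gsat ≤ g t e)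
    (hnogrowth : ∀ t, gsat ≤ g t (E t) → E (t + 1) ≤ E t) :
    ∀ t, (E t : ℝ) ≤ b t ∧ b t ≤ α * T := by
  intro t
  refine ⟨?_, (hb t).2⟩
  induction t with
  | zero => simpa [hE0] using (hb 0).1
  | succ t ih =>
    have hmono := hbmono (Nat.le_succ t)
    by_cases h : b t ≤ (E t : ℝ) + 1
    · have hle := hnogrowth t (hgain t (E t) h)
      calc ((E (t+1) : ℝ)) ≤ (E t : ℝ) := by exact_mod_cast hle
        _ ≤ b t := ih
        _ ≤ b (t+1) := hmono
    · push_neg at h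
      calc ((E (t+1) : ℝ)) ≤ (E t : ℝ) + 1 := by exact_mod_cast hEstep t
        _ ≤ b t := h.le
        _ ≤ b (t+1) := hmono
end
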